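/- With the same setup as the geometric ergodicity inheritance, if (X_k) is uniformly ergodic, i.e., sup_x ‖K_X^m(x,·) − μ‖_TV ≤ C r^{-m} for some C < ∞, r > 1, then the augmented chain (Z_k) is uniformly ergodic: sup_{(x,y)} ‖K_Z^m((x,y),·) − μ⊙q‖_TV ≤ C r^{-(m-1)}. -/

import Mathlib

open MeasureTheory ENNReal

/-- The measure `μ ⊙ q` on `ℝ^d × ℝ^d` with `(μ ⊙ q)(A × B) = ∫_A ∫_B q(y|x) dy dμ(x)`. -/
noncomputable def odotMeasure {d : ℕ} (q : (Fin d → ℝ) → (Fin d → ℝ) → ℝ)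
    (μ : Measure (Fin d → ℝ)) : Measure ((Fin d → ℝ) × (Fin d → ℝ)) :=
  (μ.prod volume).withDensity fun p => ENNReal.ofReal (q p.1 p.2)

/-- The proposal measure `q(·|x)` as a measure on `ℝ^d`. -/
noncomputable def propMeasure {d : ℕ} (q : (Fin d → ℝ) → (Fin d → ℝ) → ℝ)
    (x : Fin d → ℝ) : Measure (Fin d → ℝ) :=
  volume.withDensity fun y => ENNReal.ofReal (q x y)

/-- Marginal transition kernel `K_X` of the acceptance-rejection chain: draw `y ∼ q(·|x)`,
move to `y` with probability `α(x,y)` and stay at `x` otherwise. -/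
noncomputable def accRejKernel {d : ℕ} (q : (Fin d → ℝ) → (Fin d → ℝ) → ℝ)
    (α : (Fin d → ℝ) → (Fin d → ℝ) → ℝ) (x : Fin d → ℝ) : Measure (Fin d → ℝ) :=
  (propMeasure q x).bind fun y =>
    ENNReal.ofReal (1 - α x y) • Measure.dirac x + ENNReal.ofReal (α x y) • Measure.dirac y

/-- Transition kernel `K_Z` of the augmented chain `Z_k = (X_k, Y_k)`:
`K_Z((x,y), A×B) = (1-α(x,y)) 1_A(x) q(B|x) + α(x,y) 1_A(y) q(B|y)`. -/
noncomputable def augKernel {d : ℕ} (q : (Fin d → ℝ) → (Fin d → ℝ) → ℝ)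
    (α : (Fin d → ℝ) → (Fin d → ℝ) → ℝ) (p : (Fin d → ℝ) × (Fin d → ℝ)) :
    Measure ((Fin d → ℝ) × (Fin d → ℝ)) :=
  ENNReal.ofReal (1 - α p.1 p.2) • (Measure.dirac p.1).prod (propMeasure q p.1)
    + ENNReal.ofReal (α p.1 p.2) • (Measure.dirac p.2).prod (propMeasure q p.2)

/-- `m`-step iterate `κ^m(x, ·)` of a transition kernel, with `κ^0(x,·) = δ_x`. -/
noncomputable def iterKernel {β : Type*} [MeasurableSpace β]
    (κ : β → Measure β) : ℕ → β → Measure β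
  | 0, x => Measure.dirac x
  | (m + 1), x => (iterKernel κ m x).bind κ

/-- Total variation distance between two measures (as a supremum over measurable events). -/
noncomputable def tvDist {β : Type*} [MeasurableSpace β] (μ ν : Measure β) : ℝ :=
  ⨆ s : Set β, |(μ s).toReal - (ν s).toReal|

/-!
Write `G x = δ_x ⊗ q(·|x)`, so that `ν ⊙ q = ν.bind G`. One step of the augmented chain from
`(x, y)` is `((1 - α) δ_x + α δ_y).bind G`, and `G` intertwines the two chains:
`(G x).bind K_Z = (K_X x).bind G`, because `K_Z (x, y')` is the accept/reject step from `x`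
with proposal `y'`, followed by `G`.
Hence `K_Z^{m+1}((x,y), ·) = ((1 - α) K_X^m(x, ·) + α K_X^m(y, ·)) ⊙ q`. Binding with the
Markov kernel `G` does not increase total variation (compare both sides on a Hahn set), and
total variation to a fixed target is convex, so the bound for `K_X^m` carries over.
-/

section TotalVariation

variable {β γ : Type*} [MeasurableSpace β] [MeasurableSpace γ]

lemma ENNReal.le_add_ofReal_iff_toReal_le {a b : ℝ≥0∞} (ha : a ≠ ∞) (hb : b ≠ ∞) {D : ℝ}
    (hD : 0 ≤ D) : a ≤ b + ENNReal.ofReal D ↔ a.toReal ≤ b.toReal + D := by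
  rw [← ENNReal.le_ofReal_iff_toReal_le ha (by positivity),
    ENNReal.ofReal_add ENNReal.toReal_nonneg hD, ENNReal.ofReal_toReal hb]

lemma ENNReal.abs_toReal_sub_le_iff {a b : ℝ≥0∞} (ha : a ≠ ∞) (hb : b ≠ ∞) {D : ℝ}
    (hD : 0 ≤ D) :
    |a.toReal - b.toReal| ≤ D ↔ a ≤ b + ENNReal.ofReal D ∧ b ≤ a + ENNReal.ofReal D := by
  rw [abs_sub_le_iff, ENNReal.le_add_ofReal_iff_toReal_le ha hb hD,
    ENNReal.le_add_ofReal_iff_toReal_le hb ha hD, sub_le_iff_le_add', sub_le_iff_le_add']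

lemma ENNReal.ofReal_one_sub_add_ofReal {c : ℝ} (hc : c ∈ Set.Icc (0 : ℝ) 1) :
    ENNReal.ofReal (1 - c) + ENNReal.ofReal c = 1 := by
  rw [← ENNReal.ofReal_add (by linarith [hc.2]) hc.1, sub_add_cancel, ENNReal.ofReal_one]

lemma tvDist_nonneg (P Q : Measure β) : 0 ≤ tvDist P Q :=
  Real.iSup_nonneg fun _ => abs_nonneg _

lemma bddAbove_abs_toReal_sub (P Q : Measure β) [IsFiniteMeasure P] [IsFiniteMeasure Q] :
    BddAbove (Set.range fun s : Set β => |(P s).toReal - (Q s).toReal|) := by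
  refine ⟨(P Set.univ).toReal + (Q Set.univ).toReal, ?_⟩
  rintro _ ⟨s, rfl⟩
  have hP : (P s).toReal ≤ (P Set.univ).toReal := measureReal_mono (Set.subset_univ s)
  have hQ : (Q s).toReal ≤ (Q Set.univ).toReal := measureReal_mono (Set.subset_univ s)
  rw [abs_sub_le_iff]
  constructor <;> linarith [(P s).toReal_nonneg, (Q s).toReal_nonneg]

lemma tvDist_le_iff {P Q : Measure β} [IsFiniteMeasure P] [IsFiniteMeasure Q] {D : ℝ}
    (hD : 0 ≤ D) :
    tvDist P Q ≤ D ↔ ∀ s, MeasurableSet s → P s ≤ Q s + ENNReal.ofReal D ∧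
      Q s ≤ P s + ENNReal.ofReal D := by
  simp_rw [← ENNReal.abs_toReal_sub_le_iff (measure_ne_top P _) (measure_ne_top Q _) hD]
  refine ⟨fun h s _ => (le_ciSup (bddAbove_abs_toReal_sub P Q) s).trans h,
    fun h => ciSup_le fun s => ?_⟩
  obtain ⟨t, -, ht, hPt, hQt⟩ := exists_measurable_superset₂ P Q s
  rw [← hPt, ← hQt]
  exact h t ht

lemma lintegral_le_lintegral_add_of_forall_le_add {ν μ : Measure β} [IsFiniteMeasure ν]
    [IsFiniteMeasure μ] {D : ℝ≥0∞} (h : ∀ s, MeasurableSet s → ν s ≤ μ s + D)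
    {f : β → ℝ≥0∞} (hf : ∀ x, f x ≤ 1) :
    ∫⁻ x, f x ∂ν ≤ ∫⁻ x, f x ∂μ + D := by
  obtain ⟨S, hS⟩ := exists_isHahnDecomposition μ ν
  have hexcess : ∫⁻ x in S, f x ∂ν ≤ ∫⁻ x in S, f x ∂μ + D :=
    calc ∫⁻ x in S, f x ∂ν
        = ∫⁻ x, f x ∂(ν.restrict S - μ.restrict S) + ∫⁻ x in S, f x ∂μ := by
          rw [← lintegral_add_measure, Measure.sub_add_cancel_of_le hS.le_on]
      _ ≤ (ν.restrict S - μ.restrict S) Set.univ + ∫⁻ x in S, f x ∂μ := by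
          gcongr
          simpa using lintegral_mono hf
      _ = ν S - μ S + ∫⁻ x in S, f x ∂μ := by
          rw [Measure.sub_apply MeasurableSet.univ hS.le_on, Measure.restrict_apply_univ,
            Measure.restrict_apply_univ]
      _ ≤ ∫⁻ x in S, f x ∂μ + D := by
          rw [add_comm]
          gcongr
          exact tsub_le_iff_left.mpr (h S hS.measurableSet)
  calc ∫⁻ x, f x ∂ν = ∫⁻ x in S, f x ∂ν + ∫⁻ x in Sᶜ, f x ∂ν :=
        (lintegral_add_compl f hS.measurableSet).symm
    _ ≤ (∫⁻ x in S, f x ∂μ + D) + ∫⁻ x in Sᶜ, f x ∂μ :=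
        add_le_add hexcess (lintegral_mono' hS.ge_on_compl le_rfl)
    _ = ∫⁻ x, f x ∂μ + D := by
        rw [add_right_comm, lintegral_add_compl f hS.measurableSet]

lemma tvDist_bind_le {ν μ : Measure β} [IsProbabilityMeasure ν] [IsProbabilityMeasure μ]
    {g : β → Measure γ} (hg : Measurable g) [∀ x, IsProbabilityMeasure (g x)] :
    tvDist (ν.bind g) (μ.bind g) ≤ tvDist ν μ := by
  have := isProbabilityMeasure_bind (m := ν) hg.aemeasurable (ae_of_all _ inferInstance)
  have := isProbabilityMeasure_bind (m := μ) hg.aemeasurable (ae_of_all _ inferInstance)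
  have hD := tvDist_nonneg ν μ
  have hνμ := (tvDist_le_iff hD).mp le_rfl
  refine (tvDist_le_iff hD).mpr fun s hs => ?_
  have hgs : ∀ x, g x s ≤ 1 := fun x => prob_le_one
  simp only [Measure.bind_apply hs hg.aemeasurable]
  exact ⟨lintegral_le_lintegral_add_of_forall_le_add (fun t ht => (hνμ t ht).1) hgs,
    lintegral_le_lintegral_add_of_forall_le_add (fun t ht => (hνμ t ht).2) hgs⟩

lemma isProbabilityMeasure_smul_add_smul {ν₁ ν₂ : Measure β} [IsProbabilityMeasure ν₁]
    [IsProbabilityMeasure ν₂] {a b : ℝ≥0∞} (hab : a + b = 1) :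
    IsProbabilityMeasure (a • ν₁ + b • ν₂) :=
  ⟨by simp [hab]⟩

lemma tvDist_smul_add_smul_le {ν₁ ν₂ μ : Measure β} [IsProbabilityMeasure ν₁]
    [IsProbabilityMeasure ν₂] [IsProbabilityMeasure μ] {a b : ℝ≥0∞} (hab : a + b = 1) {t : ℝ}
    (h₁ : tvDist ν₁ μ ≤ t) (h₂ : tvDist ν₂ μ ≤ t) : tvDist (a • ν₁ + b • ν₂) μ ≤ t := by
  have := isProbabilityMeasure_smul_add_smul (ν₁ := ν₁) (ν₂ := ν₂) hab
  have ht := (tvDist_nonneg ν₁ μ).trans h₁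
  have h₁ := (tvDist_le_iff ht).mp h₁
  have h₂ := (tvDist_le_iff ht).mp h₂
  refine (tvDist_le_iff ht).mpr fun s hs => ?_
  rw [Measure.add_apply, Measure.smul_apply, Measure.smul_apply, smul_eq_mul, smul_eq_mul]
  constructor
  · calc a * ν₁ s + b * ν₂ s ≤ a * (μ s + ENNReal.ofReal t) + b * (μ s + ENNReal.ofReal t) := by
          gcongr
          exacts [(h₁ s hs).1, (h₂ s hs).1]
      _ = μ s + ENNReal.ofReal t := by rw [← add_mul, hab, one_mul]
  · calc μ s = a * μ s + b * μ s := by rw [← add_mul, hab, one_mul]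
      _ ≤ a * (ν₁ s + ENNReal.ofReal t) + b * (ν₂ s + ENNReal.ofReal t) := by
          gcongr
          exacts [(h₁ s hs).2, (h₂ s hs).2]
      _ = a * ν₁ s + b * ν₂ s + ENNReal.ofReal t := by
          rw [mul_add, mul_add, add_add_add_comm, ← add_mul, hab, one_mul]

end TotalVariation

section MarkovChains

variable {β γ δ : Type*} [MeasurableSpace β] [MeasurableSpace γ] [MeasurableSpace δ]

lemma Measure.bind_add (ν₁ ν₂ : Measure β) {g : β → Measure γ} (hg : Measurable g) :
    (ν₁ + ν₂).bind g = ν₁.bind g + ν₂.bind g := by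
  ext s hs
  simp only [Measure.add_apply, Measure.bind_apply hs hg.aemeasurable, lintegral_add_measure]

lemma isProbabilityMeasure_iterKernel {κ : β → Measure β} (hκ : Measurable κ)
    [∀ x, IsProbabilityMeasure (κ x)] (m : ℕ) (x : β) :
    IsProbabilityMeasure (iterKernel κ m x) := by
  induction m with
  | zero => exact Measure.dirac.isProbabilityMeasure
  | succ m ih => exact isProbabilityMeasure_bind hκ.aemeasurable (ae_of_all _ inferInstance)

lemma measurable_withDensity_bind {ν : Measure γ} [SFinite ν] {f : β → γ → ℝ≥0∞}
    (hf : Measurable (Function.uncurry f)) {η : β → γ → Measure δ}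
    (hη : Measurable (Function.uncurry η)) :
    Measurable fun x => (ν.withDensity (f x)).bind (η x) := by
  refine Measure.measurable_of_measurable_coe _ fun s hs => ?_
  have hηs : Measurable (Function.uncurry fun x y => η x y s) :=
    (Measure.measurable_coe hs).comp hη
  have hbind : ∀ x, (ν.withDensity (f x)).bind (η x) s = ∫⁻ y, f x y * η x y s ∂ν := fun x => by
    rw [Measure.bind_apply hs hη.of_uncurry_left.aemeasurable,
      lintegral_withDensity_eq_lintegral_mul _ hf.of_uncurry_left hηs.of_uncurry_left]
    rfl
  simp_rw [hbind]
  exact (hf.mul hηs).lintegral_prod_right'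

end MarkovChains

section AugmentedChain

variable {d : ℕ} (q α : (Fin d → ℝ) → (Fin d → ℝ) → ℝ)

instance (x : Fin d → ℝ) : SFinite (propMeasure q x) :=
  inferInstanceAs (SFinite (volume.withDensity _))

noncomputable def odotKernel (x : Fin d → ℝ) : Measure ((Fin d → ℝ) × (Fin d → ℝ)) :=
  (Measure.dirac x).prod (propMeasure q x)

noncomputable def acceptMeasure (x y : Fin d → ℝ) : Measure (Fin d → ℝ) :=
  ENNReal.ofReal (1 - α x y) • Measure.dirac x + ENNReal.ofReal (α x y) • Measure.dirac y

lemma isProbabilityMeasure_propMeasure (hq_prob : ∀ x, ∫⁻ y, ENNReal.ofReal (q x y) = 1)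
    (x : Fin d → ℝ) : IsProbabilityMeasure (propMeasure q x) :=
  ⟨by rw [propMeasure, withDensity_apply _ MeasurableSet.univ, setLIntegral_univ, hq_prob]⟩

lemma isProbabilityMeasure_odotKernel (hq_prob : ∀ x, ∫⁻ y, ENNReal.ofReal (q x y) = 1)
    (x : Fin d → ℝ) : IsProbabilityMeasure (odotKernel q x) :=
  have := isProbabilityMeasure_propMeasure q hq_prob x
  inferInstanceAs (IsProbabilityMeasure ((Measure.dirac x).prod (propMeasure q x)))

lemma isProbabilityMeasure_acceptMeasure (hα : ∀ x y, α x y ∈ Set.Icc (0 : ℝ) 1)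
    (x y : Fin d → ℝ) : IsProbabilityMeasure (acceptMeasure α x y) :=
  isProbabilityMeasure_smul_add_smul (ENNReal.ofReal_one_sub_add_ofReal (hα x y))

lemma odotKernel_apply (x : Fin d → ℝ) {s : Set ((Fin d → ℝ) × (Fin d → ℝ))}
    (hs : MeasurableSet s) :
    odotKernel q x s = ∫⁻ y, s.indicator (fun p => ENNReal.ofReal (q p.1 p.2)) (x, y) := by
  rw [odotKernel, Measure.dirac_prod, Measure.map_apply measurable_prodMk_left hs, propMeasure,
    withDensity_apply _ (measurable_prodMk_left hs),
    ← lintegral_indicator (measurable_prodMk_left hs)]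
  rfl

lemma measurable_odotKernel (hq_meas : Measurable (Function.uncurry q)) :
    Measurable (odotKernel q) := by
  refine Measure.measurable_of_measurable_coe _ fun s hs => ?_
  simp_rw [odotKernel_apply q _ hs]
  exact (hq_meas.ennreal_ofReal.indicator hs).lintegral_prod_right'

lemma measurable_acceptMeasure (hα_meas : Measurable (Function.uncurry α)) :
    Measurable (Function.uncurry (acceptMeasure α)) := by
  refine Measure.measurable_of_measurable_coe _ fun s hs => ?_
  simp only [Function.uncurry, acceptMeasure, Measure.add_apply, Measure.smul_apply,
    smul_eq_mul, Measure.dirac_apply' _ hs]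
  exact ((measurable_const.sub hα_meas).ennreal_ofReal.mul
      ((measurable_one.indicator hs).comp measurable_fst)).add
    (hα_meas.ennreal_ofReal.mul ((measurable_one.indicator hs).comp measurable_snd))

lemma isProbabilityMeasure_accRejKernel (hq_prob : ∀ x, ∫⁻ y, ENNReal.ofReal (q x y) = 1)
    (hα : ∀ x y, α x y ∈ Set.Icc (0 : ℝ) 1) (hα_meas : Measurable (Function.uncurry α))
    (x : Fin d → ℝ) : IsProbabilityMeasure (accRejKernel q α x) :=
  have := isProbabilityMeasure_propMeasure q hq_prob x
  isProbabilityMeasure_bind (measurable_acceptMeasure α hα_meas).of_uncurry_left.aemeasurable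
    (ae_of_all _ (isProbabilityMeasure_acceptMeasure α hα x))

lemma accRejKernel_eq_bind (x : Fin d → ℝ) :
    accRejKernel q α x = (propMeasure q x).bind (acceptMeasure α x) :=
  rfl

lemma measurable_accRejKernel (hq_meas : Measurable (Function.uncurry q))
    (hα_meas : Measurable (Function.uncurry α)) : Measurable (accRejKernel q α) :=
  measurable_withDensity_bind hq_meas.ennreal_ofReal (measurable_acceptMeasure α hα_meas)

lemma augKernel_eq_bind (hq_meas : Measurable (Function.uncurry q))
    (p : (Fin d → ℝ) × (Fin d → ℝ)) :
    augKernel q α p = (acceptMeasure α p.1 p.2).bind (odotKernel q) := by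
  have hG := measurable_odotKernel q hq_meas
  rw [acceptMeasure, Measure.bind_add _ _ hG, Measure.bind_smul, Measure.bind_smul,
    Measure.dirac_bind hG, Measure.dirac_bind hG, augKernel, odotKernel, odotKernel]

lemma measurable_augKernel (hq_meas : Measurable (Function.uncurry q))
    (hα_meas : Measurable (Function.uncurry α)) : Measurable (augKernel q α) := by
  simp_rw [funext fun p => augKernel_eq_bind q α hq_meas p]
  exact (Measure.measurable_bind' (measurable_odotKernel q hq_meas)).comp
    (measurable_acceptMeasure α hα_meas)

lemma odotKernel_bind_augKernel (hq_meas : Measurable (Function.uncurry q))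
    (hα_meas : Measurable (Function.uncurry α)) (x : Fin d → ℝ) :
    (odotKernel q x).bind (augKernel q α) = (accRejKernel q α x).bind (odotKernel q) := by
  have hZ := measurable_augKernel q α hq_meas hα_meas
  have hA : Measurable (acceptMeasure α x) := (measurable_acceptMeasure α hα_meas).of_uncurry_left
  calc (odotKernel q x).bind (augKernel q α)
      = ((propMeasure q x).bind fun y => Measure.dirac (x, y)).bind (augKernel q α) := by
        rw [odotKernel, Measure.dirac_prod, Measure.bind_dirac_eq_map _ measurable_prodMk_left]
    _ = (propMeasure q x).bind fun y => (acceptMeasure α x y).bind (odotKernel q) := by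
        have hδ : Measurable fun y : Fin d → ℝ => Measure.dirac (x, y) :=
          Measure.measurable_dirac.comp measurable_prodMk_left
        rw [Measure.bind_bind hδ.aemeasurable hZ.aemeasurable]
        simp_rw [Measure.dirac_bind hZ, augKernel_eq_bind q α hq_meas]
    _ = (accRejKernel q α x).bind (odotKernel q) := by
        rw [accRejKernel_eq_bind, Measure.bind_bind hA.aemeasurable
          (measurable_odotKernel q hq_meas).aemeasurable]

lemma iterKernel_augKernel_succ (hq_meas : Measurable (Function.uncurry q))
    (hα_meas : Measurable (Function.uncurry α)) (m : ℕ) (x y : Fin d → ℝ) :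
    iterKernel (augKernel q α) (m + 1) (x, y) =
      (ENNReal.ofReal (1 - α x y) • iterKernel (accRejKernel q α) m x
        + ENNReal.ofReal (α x y) • iterKernel (accRejKernel q α) m y).bind (odotKernel q) := by
  have hG := measurable_odotKernel q hq_meas
  have hK := measurable_accRejKernel q α hq_meas hα_meas
  have hZ := measurable_augKernel q α hq_meas hα_meas
  induction m with
  | zero =>
    change (Measure.dirac (x, y)).bind (augKernel q α) = _
    rw [Measure.dirac_bind hZ, augKernel_eq_bind q α hq_meas]
    rfl
  | succ m ih =>
    rw [iterKernel, ih, Measure.bind_bind hG.aemeasurable hZ.aemeasurable]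
    simp_rw [odotKernel_bind_augKernel q α hq_meas hα_meas]
    rw [← Measure.bind_bind hK.aemeasurable hG.aemeasurable, Measure.bind_add _ _ hK,
      Measure.bind_smul, Measure.bind_smul]
    rfl

lemma odotMeasure_eq_bind (hq_meas : Measurable (Function.uncurry q)) (μ : Measure (Fin d → ℝ))
    [SFinite μ] : odotMeasure q μ = μ.bind (odotKernel q) := by
  ext s hs
  rw [odotMeasure, withDensity_apply _ hs,
    Measure.bind_apply hs (measurable_odotKernel q hq_meas).aemeasurable,
    ← lintegral_indicator hs,
    lintegral_prod (f := fun p => s.indicator (fun p => ENNReal.ofReal (q p.1 p.2)) p)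
      (hq_meas.ennreal_ofReal.indicator hs).aemeasurable]
  simp_rw [odotKernel_apply q _ hs]

end AugmentedChain

theorem augmented_chain_uniformly_ergodic_general
    {d : ℕ} (q : (Fin d → ℝ) → (Fin d → ℝ) → ℝ)
    (α : (Fin d → ℝ) → (Fin d → ℝ) → ℝ)
    (hq_meas : Measurable (Function.uncurry q))
    (hq_prob : ∀ x, ∫⁻ y, ENNReal.ofReal (q x y) = 1)
    (hα : ∀ x y, α x y ∈ Set.Icc (0:ℝ) 1)
    (hα_meas : Measurable (Function.uncurry α))
    (μ : Measure (Fin d → ℝ)) [IsProbabilityMeasure μ]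
    (C r : ℝ)
    (hunif : ∀ (m : ℕ) (x : Fin d → ℝ),
      tvDist (iterKernel (accRejKernel q α) m x) μ ≤ C / r ^ m) :
    ∀ (m : ℕ) (x y : Fin d → ℝ),
      tvDist (iterKernel (augKernel q α) (m + 1) (x, y)) (odotMeasure q μ) ≤ C / r ^ m := by
  intro m x y
  have := isProbabilityMeasure_odotKernel q hq_prob
  have := isProbabilityMeasure_accRejKernel q α hq_prob hα hα_meas
  have hK := measurable_accRejKernel q α hq_meas hα_meas
  have := isProbabilityMeasure_iterKernel hK m x
  have := isProbabilityMeasure_iterKernel hK m y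
  have hweights := ENNReal.ofReal_one_sub_add_ofReal (hα x y)
  have := isProbabilityMeasure_smul_add_smul (ν₁ := iterKernel (accRejKernel q α) m x)
    (ν₂ := iterKernel (accRejKernel q α) m y) hweights
  rw [iterKernel_augKernel_succ q α hq_meas hα_meas, odotMeasure_eq_bind q hq_meas]
  exact (tvDist_bind_le (measurable_odotKernel q hq_meas)).trans
    (tvDist_smul_add_smul_le hweights (hunif m x) (hunif m y))

/-- If the marginal acceptance-rejection chain `(X_k)` is uniformly ergodic,
i.e. `‖K_X^m(x,·) − μ‖_TV ≤ C r^{-m}` for all `m` and all `x` (with `C < ∞`, `r > 1`),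
then the augmented chain is uniformly ergodic:
`‖K_Z^m((x,y),·) − μ ⊙ q‖_TV ≤ C r^{-(m-1)}` for all `m ≥ 1` (written `m + 1`). -/
theorem augmented_chain_uniformly_ergodic
    {d : ℕ} (q : (Fin d → ℝ) → (Fin d → ℝ) → ℝ)
    (α : (Fin d → ℝ) → (Fin d → ℝ) → ℝ)
    (hq_nonneg : ∀ x y, 0 ≤ q x y)
    (hq_meas : Measurable (Function.uncurry q))
    (hq_prob : ∀ x, ∫⁻ y, ENNReal.ofReal (q x y) = 1)
    (hα : ∀ x y, α x y ∈ Set.Icc (0:ℝ) 1)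
    (hα_meas : Measurable (Function.uncurry α))
    (μ : Measure (Fin d → ℝ)) [IsProbabilityMeasure μ]
    (C r : ℝ) (hr : 1 < r)
    (hunif : ∀ (m : ℕ) (x : Fin d → ℝ),
      tvDist (iterKernel (accRejKernel q α) m x) μ ≤ C / r ^ m) :
    ∀ (m : ℕ) (x y : Fin d → ℝ),
      tvDist (iterKernel (augKernel q α) (m + 1) (x, y)) (odotMeasure q μ) ≤ C / r ^ m :=
  augmented_chain_uniformly_ergodic_general q α hq_meas hq_prob hα hα_meas μ C r hunif
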